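/- Let R be a ring and T4 the two-sided ideal of R generated by all commutators [a1,a2,a3,a4]. Then for all a1,...,a6 ∈ R, any two commutators of length at least 2 commute modulo T4; in particular [[a1,a2,a3],[a4,a5]] ∈ T4 and [[a1,a2],[a3,a4]] ∈ T4. -/
import Mathlib

/-- Commutator `[a,b] = a*b - b*a`. -/
def br {R : Type*} [Ring R] (a b : R) : R := a * b - b * a

/-- Left-normed triple commutator `[a,b,c] = [[a,b],c]`. -/
def br3 {R : Type*} [Ring R] (a b c : R) : R := br (br a b) c

/-- Left-normed fourth commutator `[a,b,c,d] = [[[a,b],c],d]`. -/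
def br4 {R : Type*} [Ring R] (a b c d : R) : R := br (br3 a b c) d

/-- The two-sided ideal generated by all fourth left-normed commutators. -/
def T4 (R : Type*) [Ring R] : TwoSidedIdeal R :=
  TwoSidedIdeal.span {x | ∃ a b c d : R, x = br4 a b c d}

lemma gen_mem_T4 {R : Type*} [Ring R] (a b c d : R) : br4 a b c d ∈ T4 R :=
  TwoSidedIdeal.subset_span ⟨a, b, c, d, rfl⟩

lemma br_mem_T4 {R : Type*} [Ring R] {x : R} (h : x ∈ T4 R) (y : R) : br x y ∈ T4 R :=
  (T4 R).sub_mem ((T4 R).mul_mem_right x y h) ((T4 R).mul_mem_left y x h)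

lemma jacobi {R : Type*} [Ring R] (x c d : R) :
    br x (br c d) = br (br x c) d - br (br x d) c := by
  simp only [br]; noncomm_ring

theorem commutators_commute_mod_T4 {R : Type*} [Ring R] (a1 a2 a3 a4 a5 a6 : R) :
    br (br3 a1 a2 a3) (br a4 a5) ∈ T4 R ∧ br (br a1 a2) (br a3 a4) ∈ T4 R := by
  constructor
  · rw [jacobi]
    exact (T4 R).sub_mem (br_mem_T4 (gen_mem_T4 a1 a2 a3 a4) a5)
      (br_mem_T4 (gen_mem_T4 a1 a2 a3 a5) a4)
  · rw [jacobi]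
    exact (T4 R).sub_mem (gen_mem_T4 a1 a2 a3 a4) (gen_mem_T4 a1 a2 a4 a3)
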